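/- For the inviscid Burgers equation u_t + g(u)·u_x = 0, the scaling vector field v = F²(u)·(t·∂/∂t + x·∂/∂x) is a point symmetry for every smooth function F² : ℝ → ℝ. -/
import Mathlib

lemma deriv_affine (a b c : ℝ) : deriv (fun s : ℝ => a * s + b) c = a := by
  have : HasDerivAt (fun s : ℝ => a * s + b) a c := by
    simpa using ((hasDerivAt_id c).const_mul a).add_const b
  exact this.deriv

/-- For `u_t + g(u) u_x = 0`, the scaling field `v = F²(u)(t ∂t + x ∂x)` is a point
symmetry: its first prolongation annihilates `u_t + g(u) u_x` modulo `u_t = -g(u) u_x`. -/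
theorem inviscid_burgers_symmetry_scaling (g F : ℝ → ℝ)
    (hg : ContDiff ℝ (⊤ : ℕ∞) g) (hF : ContDiff ℝ (⊤ : ℕ∞) F) :
    ∀ t x u ux utt utx uxx : ℝ,
      let ut := -(g u) * ux
      let ξ := F u * t
      let τ := F u * x
      -- partial derivatives of the characteristic Q = -ξ u_t - τ u_x
      let Qt := deriv (fun s => -(F u * s * ut) - F u * x * ux) t
      let Qx := deriv (fun s => -(F u * t * ut) - F u * s * ux) x
      let Qu := deriv (fun w => -(F w * t * ut) - F w * x * ux) u
      let Qut := deriv (fun w => -(F u * t * w) - F u * x * ux) ut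
      let Qux := deriv (fun w => -(F u * t * ut) - F u * x * w) ux
      let DtQ := Qt + ut * Qu + utt * Qut + utx * Qux
      let DxQ := Qx + ux * Qu + utx * Qut + uxx * Qux
      let φt := DtQ + ξ * utt + τ * utx
      let φx := DxQ + ξ * utx + τ * uxx
      -- v^(1)[u_t + g(u) u_x] = φ^t + g(u) φ^x = 0 (since φ = 0)
      φt + g u * φx = 0 := by
  intro t x u ux utt utx uxx ut ξ τ Qt Qx Qu Qut Qux DtQ DxQ φt φx
  have hQt : Qt = -(F u * ut) := by
    show deriv _ _ = _
    rw [show (fun s => -(F u * s * ut) - F u * x * ux)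
        = fun s : ℝ => (-(F u * ut)) * s + (-(F u * x * ux)) from funext fun s => by ring]
    exact deriv_affine _ _ _
  have hQx : Qx = -(F u * ux) := by
    show deriv _ _ = _
    rw [show (fun s => -(F u * t * ut) - F u * s * ux)
        = fun s : ℝ => (-(F u * ux)) * s + (-(F u * t * ut)) from funext fun s => by ring]
    exact deriv_affine _ _ _
  have hQut : Qut = -(F u * t) := by
    show deriv _ _ = _
    rw [show (fun w => -(F u * t * w) - F u * x * ux)
        = fun w : ℝ => (-(F u * t)) * w + (-(F u * x * ux)) from funext fun w => by ring]
    exact deriv_affine _ _ _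
  have hQux : Qux = -(F u * x) := by
    show deriv _ _ = _
    rw [show (fun w => -(F u * t * ut) - F u * x * w)
        = fun w : ℝ => (-(F u * x)) * w + (-(F u * t * ut)) from funext fun w => by ring]
    exact deriv_affine _ _ _
  show DtQ + ξ * utt + τ * utx + g u * (DxQ + ξ * utx + τ * uxx) = 0
  show Qt + ut * Qu + utt * Qut + utx * Qux + ξ * utt + τ * utx
      + g u * (Qx + ux * Qu + utx * Qut + uxx * Qux + ξ * utx + τ * uxx) = 0
  rw [hQt, hQx, hQut, hQux]
  show -(F u * ut) + ut * Qu + utt * -(F u * t) + utx * -(F u * x) + F u * t * utt + F u * x * utx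
      + g u * (-(F u * ux) + ux * Qu + utx * -(F u * t) + uxx * -(F u * x) + F u * t * utx + F u * x * uxx) = 0
  show -(F u * (-(g u) * ux)) + (-(g u) * ux) * Qu + utt * -(F u * t) + utx * -(F u * x) + F u * t * utt + F u * x * utx
      + g u * (-(F u * ux) + ux * Qu + utx * -(F u * t) + uxx * -(F u * x) + F u * t * utx + F u * x * uxx) = 0
  ring
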